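/- Fix b ∈ ℝ and s > 0. The function t ↦ ∫₀^s ψ_{s+t}(y) dy is strictly decreasing on (0, ∞). -/

import Mathlib

open Real MeasureTheory Set Filter

/-- Standard Gaussian density φ(z) = (1/√(2π)) e^{−z²/2}. -/
noncomputable def gaussPdf (z : ℝ) : ℝ := (1 / Real.sqrt (2 * π)) * Real.exp (-z ^ 2 / 2)

/-- Standard Gaussian distribution function Φ(y) = ∫_{−∞}^y φ(z) dz. -/
noncomputable def gaussCdf (y : ℝ) : ℝ := ∫ z in Set.Iio y, gaussPdf z

/-- ψ_t(u) = (e^{−b²u/2}/(π√(u(t−u)))) · [ e^{−b²(t−u)/2}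
      + (b/2)·√(2π(t−u)) · (2Φ(b√(t−u)) − 1) ]. -/
noncomputable def psi (b t u : ℝ) : ℝ :=
  (Real.exp (-b ^ 2 * u / 2) / (π * Real.sqrt (u * (t - u)))) *
    (Real.exp (-b ^ 2 * (t - u) / 2) +
      (b / 2) * Real.sqrt (2 * π * (t - u)) *
        (2 * gaussCdf (b * Real.sqrt (t - u)) - 1))

/-- Inverse Gaussian first-passage density f_{τ₁}(t) = (|a−x|/t^{3/2}) φ((a+bt−x)/√t). -/
noncomputable def invGaussPdf (a x b t : ℝ) : ℝ :=
  (|a - x| / t ^ ((3 : ℝ) / 2)) * gaussPdf ((a + b * t - x) / Real.sqrt t)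

/-!
For u < t, ψ_t(u) = e^{−b²u/2}/(π√u) · h(t − u) with
h(v) = e^{−b²v/2}/√v + (b/2)√(2π)(2Φ(b√v) − 1). Differentiating, the two terms carrying b² cancel
and h'(v) = −e^{−b²v/2}/(2v√v) < 0, so for each y ∈ (0, s) the integrand ψ_{s+t}(y) is strictly
decreasing in t. The singularity at y = 0 is of order y^{−1/2}, hence integrable, and integrating
the strict pointwise inequality gives the claim.
-/

lemma continuous_gaussPdf : Continuous gaussPdf := by
  unfold gaussPdf
  fun_prop

lemma integrable_gaussPdf : Integrable gaussPdf := by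
  refine ((integrable_exp_neg_mul_sq (by norm_num : (0 : ℝ) < 1 / 2)).const_mul
    (1 / √(2 * π))).congr (Eventually.of_forall fun z => ?_)
  simp only [gaussPdf]
  ring_nf

lemma hasDerivAt_gaussCdf (x : ℝ) : HasDerivAt gaussCdf (gaussPdf x) x := by
  have hcdf : gaussCdf = fun y => gaussCdf 0 + ∫ z in (0 : ℝ)..y, gaussPdf z := by
    ext y
    simp only [gaussCdf, ← integral_Iic_eq_integral_Iio]
    rw [← intervalIntegral.integral_Iic_sub_Iic integrable_gaussPdf.integrableOn
      integrable_gaussPdf.integrableOn]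
    ring
  rw [hcdf]
  exact (intervalIntegral.integral_hasDerivAt_right integrable_gaussPdf.intervalIntegrable
    continuous_gaussPdf.stronglyMeasurable.stronglyMeasurableAtFilter
    continuous_gaussPdf.continuousAt).const_add _

lemma continuous_gaussCdf : Continuous gaussCdf :=
  continuous_iff_continuousAt.2 fun x => (hasDerivAt_gaussCdf x).continuousAt

lemma gaussPdf_mul_sqrt (b : ℝ) {v : ℝ} (hv : 0 ≤ v) :
    gaussPdf (b * √v) = exp (-b ^ 2 * v / 2) / √(2 * π) := by
  rw [gaussPdf, mul_pow, sq_sqrt hv]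
  ring_nf

noncomputable def psiFactor (b v : ℝ) : ℝ :=
  exp (-b ^ 2 * v / 2) / √v + b / 2 * √(2 * π) * (2 * gaussCdf (b * √v) - 1)

lemma psi_eq_mul_psiFactor {b t u : ℝ} (hut : u < t) :
    psi b t u = exp (-b ^ 2 * u / 2) / π * psiFactor b (t - u) * (√u)⁻¹ := by
  have hv : 0 < √(t - u) := sqrt_pos.2 (sub_pos.2 hut)
  rw [psi, psiFactor, sqrt_mul' _ (sub_pos.2 hut).le, sqrt_mul two_pi_pos.le]
  field_simp

lemma hasDerivAt_psiFactor (b : ℝ) {v : ℝ} (hv : 0 < v) :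
    HasDerivAt (psiFactor b) (-exp (-b ^ 2 * v / 2) / (2 * v * √v)) v := by
  have hsqrt : HasDerivAt (√·) (1 / (2 * √v)) v := hasDerivAt_sqrt hv.ne'
  have hexp : HasDerivAt (fun v => exp (-b ^ 2 * v / 2)) (-b ^ 2 / 2 * exp (-b ^ 2 * v / 2)) v := by
    simpa [mul_comm] using (((hasDerivAt_id v).const_mul (-b ^ 2)).div_const 2).exp
  have hcdf : HasDerivAt (fun v => gaussCdf (b * √v))
      (gaussPdf (b * √v) * (b * (1 / (2 * √v)))) v :=
    (hasDerivAt_gaussCdf _).comp v (hsqrt.const_mul b)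
  refine ((hexp.fun_div hsqrt (sqrt_pos.2 hv).ne').fun_add
    (((hcdf.const_mul 2).sub_const 1).const_mul (b / 2 * √(2 * π)))).congr_deriv ?_
  rw [gaussPdf_mul_sqrt b hv.le]
  field_simp
  rw [sq_sqrt hv.le]
  ring

lemma continuousOn_psiFactor (b : ℝ) : ContinuousOn (psiFactor b) (Ioi 0) :=
  fun _ hv => (hasDerivAt_psiFactor b hv).continuousAt.continuousWithinAt

lemma psiFactor_strictAntiOn (b : ℝ) : StrictAntiOn (psiFactor b) (Ioi 0) := by
  refine strictAntiOn_of_hasDerivWithinAt_neg (convex_Ioi 0) (continuousOn_psiFactor b)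
    (fun v hv => (hasDerivAt_psiFactor b (interior_subset hv)).hasDerivWithinAt) fun v hv => ?_
  have hv : 0 < v := interior_subset hv
  exact div_neg_of_neg_of_pos (neg_neg_of_pos (exp_pos _)) (by positivity)

lemma psi_lt_psi_of_lt {b u t₁ t₂ : ℝ} (hu : 0 < u) (hut : u < t₁) (ht : t₁ < t₂) :
    psi b t₂ u < psi b t₁ u := by
  rw [psi_eq_mul_psiFactor hut, psi_eq_mul_psiFactor (hut.trans ht)]
  gcongr ?_ * _
  exact mul_lt_mul_of_pos_left (psiFactor_strictAntiOn b (sub_pos.2 hut)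
    (sub_pos.2 (hut.trans ht)) (sub_lt_sub_right ht u)) (by positivity)

lemma intervalIntegrable_psi {b s t : ℝ} (hs : 0 ≤ s) (hst : s < t) :
    IntervalIntegrable (psi b t) volume 0 s := by
  have hlt : ∀ u ∈ uIcc 0 s, u < t := fun _ hu =>
    hu.2.trans_lt (max_lt (hs.trans_lt hst) hst)
  have hinvSqrt : IntervalIntegrable (fun u : ℝ => (√u)⁻¹) volume 0 s := by
    refine (intervalIntegral.intervalIntegrable_rpow' (r := -(1 / 2)) (by norm_num)).congr ?_
    rw [uIoc_of_le hs]
    intro u hu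
    simp only [rpow_neg hu.1.le, sqrt_eq_rpow]
  have hfactor : ContinuousOn (fun u => exp (-b ^ 2 * u / 2) / π * psiFactor b (t - u))
      (uIcc 0 s) :=
    (by fun_prop : Continuous fun u => exp (-b ^ 2 * u / 2) / π).continuousOn.mul
      ((continuousOn_psiFactor b).comp (by fun_prop) fun u hu => sub_pos.2 (hlt u hu))
  exact (hinvSqrt.continuousOn_mul hfactor).congr fun u hu =>
    (psi_eq_mul_psiFactor (hlt u (uIoc_subset_uIcc hu))).symm

theorem stmt4 (b s : ℝ) (hs : 0 < s) :
    StrictAntiOn (fun t => ∫ y in (0 : ℝ)..s, psi b (s + t) y) (Set.Ioi 0) := by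
  intro t₁ ht₁ t₂ ht₂ ht
  have hint : ∀ t ∈ Ioi (0 : ℝ), IntervalIntegrable (psi b (s + t)) volume 0 s := fun t ht =>
    intervalIntegrable_psi hs.le (by linarith [ht.out])
  rw [← sub_pos, ← intervalIntegral.integral_sub (hint t₁ ht₁) (hint t₂ ht₂)]
  refine intervalIntegral.intervalIntegral_pos_of_pos_on ((hint t₁ ht₁).sub (hint t₂ ht₂))
    (fun u hu => sub_pos.2 ?_) hs
  exact psi_lt_psi_of_lt hu.1 (by linarith [hu.2, ht₁.out]) (by linarith)
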